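/- Let f be a set of natural numbers, d > 0 a real constant, c > 0, and suppose there is a constant C₀ > 0 such that |π_f(x) − d·∫_2^x dt/ln t| ≤ C₀·x·exp(−c·√(ln x)) for all x ≥ 2. Then there is a constant C > 0 such that for all x ≥ 2: |∑_{p prime, p ≤ x, p ∈ f} (ln p)/p − d·ln x| ≤ C. -/

import Mathlib

open Filter

/-- `primeCountIn f t` is the number of primes `p ≤ t` with `p ∈ f`. -/
noncomputable def primeCountIn (f : Set ℕ) (t : ℝ) : ℕ :=
  {p : ℕ | p.Prime ∧ p ∈ f ∧ (p : ℝ) ≤ t}.ncard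

open scoped Classical in
/-- `primeSumIn f g x` is the sum of `g p` over primes `p ≤ x` with `p ∈ f`. -/
noncomputable def primeSumIn (f : Set ℕ) (g : ℝ → ℝ) (x : ℝ) : ℝ :=
  ∑ p ∈ (Finset.range (⌊x⌋₊ + 1)).filter (fun p => p.Prime ∧ p ∈ f), g p

/-!
By Abel summation, `∑_{p ≤ x, p ∈ f} log p / p = g(x) π_f(x) - ∫_2^x g'(t) π_f(t) dt` with
`g(t) = log t / t`. Writing `π_f = d Li + E` with `Li(t) = ∫_2^t dt / log t`, an integration by
parts turns the main term into `d (log x - log 2) + d g(x) Li(x)`, so the sum minus `d log x` is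
`g(x) E(x) - d log 2 - ∫_2^x g'(t) E(t) dt`. The hypothesis gives `|E(t)| ≤ K t / log³ t`
(as `exp (-v) ≤ 6! / v⁶`), hence `g(x) E(x) = O(1 / log² x)` and
`g'(t) E(t) = O(1 / (t log² t))`, which is integrable on `[2, ∞)`.
-/

open Real MeasureTheory intervalIntegral

lemma exp_neg_mul_sqrt_le {c u : ℝ} (hc : 0 < c) (hu : 0 < u) :
    exp (-c * √u) ≤ 720 / (c ^ 6 * u ^ 3) := by
  have hv : (c * √u) ^ 6 = c ^ 6 * u ^ 3 := by
    rw [mul_pow, show √u ^ 6 = (√u ^ 2) ^ 3 by ring, sq_sqrt hu.le]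
  have h := pow_div_factorial_le_exp _ (mul_nonneg hc.le (sqrt_nonneg u)) 6
  rw [hv, show (Nat.factorial 6 : ℝ) = 720 by norm_num [Nat.factorial]] at h
  rw [neg_mul, exp_neg, ← one_div, div_le_div_iff₀ (exp_pos _) (by positivity)]
  rw [div_le_iff₀ (by norm_num)] at h
  linarith

lemma hasDerivAt_log_div_self {t : ℝ} (ht : t ≠ 0) :
    HasDerivAt (fun t => log t / t) ((1 - log t) / t ^ 2) t :=
  ((hasDerivAt_log ht).div (hasDerivAt_id' t) ht).congr_deriv (by field_simp)

lemma continuousOn_one_sub_log_div_sq : ContinuousOn (fun t => (1 - log t) / t ^ 2) {0}ᶜ :=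
  (continuousOn_const.sub continuousOn_log).div (continuousOn_pow 2) fun _ ht =>
    pow_ne_zero 2 ht

lemma abs_one_sub_log_div_sq_le {t : ℝ} (ht : 2 ≤ t) :
    |(1 - log t) / t ^ 2| ≤ 3 * log t / t ^ 2 := by
  have h2 : 1 / 2 < log t := (log_two_gt_d9.trans_le' (by norm_num)).trans_le
    (log_le_log (by norm_num) ht)
  rw [abs_div, abs_of_nonneg (sq_nonneg t)]
  gcongr
  exact abs_le.mpr ⟨by linarith, by linarith⟩

lemma continuousOn_one_div_mul_log_sq :
    ContinuousOn (fun t => 1 / (t * log t ^ 2)) (Set.Ioi 1) :=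
  continuousOn_const.div (continuousOn_id.mul ((continuousOn_log.mono fun _ ht =>
    (zero_lt_one.trans ht).ne').pow 2)) fun _ ht =>
      mul_ne_zero (zero_lt_one.trans ht).ne' (pow_ne_zero 2 (log_pos ht).ne')

lemma integral_one_div_mul_log_sq {a b : ℝ} (ha : 1 < a) (hab : a ≤ b) :
    ∫ t in a..b, 1 / (t * log t ^ 2) = (log a)⁻¹ - (log b)⁻¹ := by
  have hgt : Set.uIcc a b ⊆ Set.Ioi 1 := fun t ht => ha.trans_le (Set.uIcc_of_le hab ▸ ht).1
  have hderiv : ∀ t ∈ Set.uIcc a b,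
      HasDerivAt (fun t => -(log t)⁻¹) (1 / (t * log t ^ 2)) t := fun t ht =>
    ((hasDerivAt_log (zero_lt_one.trans (hgt ht)).ne').inv
      (log_pos (hgt ht)).ne').neg.congr_deriv (by field_simp)
  rw [integral_eq_sub_of_hasDerivAt hderiv
    (continuousOn_one_div_mul_log_sq.mono hgt).intervalIntegrable]
  ring

lemma abs_log_div_self_mul_le {K x e : ℝ} (hK : 0 ≤ K) (hx : 2 ≤ x)
    (he : |e| ≤ K * x / log x ^ 3) : |log x / x * e| ≤ K / log 2 ^ 2 := by
  have hx0 : 0 < x := two_pos.trans_le hx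
  have hlog2 : 0 < log 2 := log_pos one_lt_two
  have hlog : log 2 ≤ log x := log_le_log two_pos hx
  have hlogx : 0 < log x := hlog2.trans_le hlog
  calc |log x / x * e| = log x / x * |e| := by
        rw [abs_mul, abs_of_nonneg (div_nonneg hlogx.le hx0.le)]
    _ ≤ log x / x * (K * x / log x ^ 3) := by gcongr
    _ = K / log x ^ 2 := by field_simp
    _ ≤ K / log 2 ^ 2 := by gcongr

lemma abs_integral_one_sub_log_div_sq_mul_le {K x : ℝ} {e : ℝ → ℝ} (hK : 0 ≤ K) (hx : 2 ≤ x)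
    (he : ∀ t ∈ Set.Icc 2 x, |e t| ≤ K * t / log t ^ 3) :
    |∫ t in (2 : ℝ)..x, (1 - log t) / t ^ 2 * e t| ≤ 3 * K / log 2 := by
  have hpointwise : ∀ t ∈ Set.Ioc 2 x,
      |(1 - log t) / t ^ 2 * e t| ≤ 3 * K * (1 / (t * log t ^ 2)) := fun t ht => by
    have ht0 : 0 < t := two_pos.trans ht.1
    have hlog : 0 < log t := log_pos (one_lt_two.trans ht.1)
    calc |(1 - log t) / t ^ 2 * e t| = |(1 - log t) / t ^ 2| * |e t| := abs_mul _ _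
      _ ≤ 3 * log t / t ^ 2 * (K * t / log t ^ 3) :=
        mul_le_mul (abs_one_sub_log_div_sq_le ht.1.le) (he t (Set.Ioc_subset_Icc_self ht))
          (abs_nonneg _) (by positivity)
      _ = 3 * K * (1 / (t * log t ^ 2)) := by field_simp
  have hbound : IntervalIntegrable (fun t => 3 * K * (1 / (t * log t ^ 2))) volume 2 x :=
    ((continuousOn_one_div_mul_log_sq.mono fun t ht =>
      one_lt_two.trans_le (Set.uIcc_of_le hx ▸ ht).1).intervalIntegrable).const_mul _
  have hlogx : 0 < log x := log_pos (one_lt_two.trans_le hx)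
  calc |∫ t in (2 : ℝ)..x, (1 - log t) / t ^ 2 * e t|
      ≤ ∫ t in (2 : ℝ)..x, 3 * K * (1 / (t * log t ^ 2)) :=
        norm_integral_le_of_norm_le hx
          (ae_of_all _ fun t ht => (norm_eq_abs _).trans_le (hpointwise t ht)) hbound
    _ = 3 * K * ((log 2)⁻¹ - (log x)⁻¹) := by
        rw [intervalIntegral.integral_const_mul, integral_one_div_mul_log_sq one_lt_two hx]
    _ ≤ 3 * K / log 2 := by
        rw [div_eq_mul_inv]
        gcongr
        exact sub_le_self _ (inv_nonneg.2 hlogx.le)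

noncomputable def offsetLogIntegral (x : ℝ) : ℝ := ∫ t in (2 : ℝ)..x, 1 / log t

lemma offsetLogIntegral_two : offsetLogIntegral 2 = 0 := integral_same

lemma continuousOn_one_div_log : ContinuousOn (fun t => 1 / log t) (Set.Ioi 1) :=
  continuousOn_const.div (continuousOn_log.mono fun _ ht => (zero_lt_one.trans ht).ne')
    fun _ ht => (log_pos ht).ne'

lemma hasDerivAt_offsetLogIntegral {x : ℝ} (hx : 1 < x) :
    HasDerivAt offsetLogIntegral (1 / log x) x := by
  have hsub : Set.uIcc 2 x ⊆ Set.Ioi 1 := fun t ht =>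
    lt_min one_lt_two hx |>.trans_le ht.1
  exact integral_hasDerivAt_right (continuousOn_one_div_log.mono hsub).intervalIntegrable
    (continuousOn_one_div_log.stronglyMeasurableAtFilter isOpen_Ioi x hx)
    (continuousOn_one_div_log.continuousAt (Ioi_mem_nhds hx))

lemma integral_one_sub_log_div_sq_mul_offsetLogIntegral {x : ℝ} (hx : 2 ≤ x) :
    ∫ t in (2 : ℝ)..x, (1 - log t) / t ^ 2 * offsetLogIntegral t =
      log x / x * offsetLogIntegral x - (log x - log 2) := by
  have hgt : ∀ t ∈ Set.uIcc 2 x, 1 < t := fun t ht =>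
    one_lt_two.trans_le (Set.uIcc_of_le hx ▸ ht).1
  have hne : Set.uIcc 2 x ⊆ {0}ᶜ := fun t ht => (zero_lt_one.trans (hgt t ht)).ne'
  have hparts := integral_mul_deriv_eq_deriv_mul
    (fun t ht => hasDerivAt_log_div_self (hne ht))
    (fun t ht => hasDerivAt_offsetLogIntegral (hgt t ht))
    (continuousOn_one_sub_log_div_sq.mono hne).intervalIntegrable
    (continuousOn_one_div_log.mono hgt).intervalIntegrable
  have hlog : ∫ t in (2 : ℝ)..x, log t / t * (1 / log t) = log x - log 2 := by
    rw [integral_congr (g := fun t => t⁻¹), integral_inv_of_pos two_pos (by linarith),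
      log_div (by linarith) two_ne_zero]
    intro t ht
    have := log_pos (hgt t ht)
    field_simp
  rw [← hlog, hparts, offsetLogIntegral_two]
  ring

lemma sum_log_div_mul_sub_eq (c : ℕ → ℝ) (hc0 : c 0 = 0) (hc1 : c 1 = 0) (d : ℝ) {x : ℝ}
    (hx : 2 ≤ x) :
    ∑ k ∈ Finset.Icc 0 ⌊x⌋₊, log k / k * c k - d * log x =
      log x / x * (∑ k ∈ Finset.Icc 0 ⌊x⌋₊, c k - d * offsetLogIntegral x) - d * log 2 -
        ∫ t in (2 : ℝ)..x, (1 - log t) / t ^ 2 *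
          (∑ k ∈ Finset.Icc 0 ⌊t⌋₊, c k - d * offsetLogIntegral t) := by
  have hne : Set.Icc 2 x ⊆ {0}ᶜ := fun t ht => (two_pos.trans_le ht.1).ne'
  have hderiv : ∀ t ∈ Set.Icc 2 x, HasDerivAt (fun t => log t / t) ((1 - log t) / t ^ 2) t :=
    fun t ht => hasDerivAt_log_div_self (hne ht)
  have hφ := continuousOn_one_sub_log_div_sq.mono hne
  have habel := sum_mul_eq_sub_integral_mul₁ c hc0 hc1 x
    (fun t ht => (hderiv t ht).differentiableAt)
    (hφ.integrableOn_Icc.congr_fun (fun t ht => (hderiv t ht).deriv.symm) measurableSet_Icc)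
  rw [← integral_of_le hx, integral_congr fun t ht =>
    congrArg (· * _) (hderiv t (Set.uIcc_of_le hx ▸ ht)).deriv] at habel
  have hA : IntervalIntegrable (fun t => (1 - log t) / t ^ 2 * ∑ k ∈ Finset.Icc 0 ⌊t⌋₊, c k)
      volume 2 x :=
    (intervalIntegrable_iff_integrableOn_Icc_of_le hx).2
      (integrableOn_mul_sum_Icc c zero_le_two hφ.integrableOn_Icc)
  have hL : IntervalIntegrable (fun t => (1 - log t) / t ^ 2 * offsetLogIntegral t) volume 2 x :=
    (hφ.mul fun t ht => (hasDerivAt_offsetLogIntegral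
      (one_lt_two.trans_le ht.1)).continuousAt.continuousWithinAt).intervalIntegrable_of_Icc hx
  simp_rw [mul_sub, mul_left_comm _ d]
  rw [integral_sub hA (hL.const_mul d), intervalIntegral.integral_const_mul,
    integral_one_sub_log_div_sq_mul_offsetLogIntegral hx, habel]
  ring

theorem abs_sum_log_div_mul_sub_le (c : ℕ → ℝ) (hc0 : c 0 = 0) (hc1 : c 1 = 0) {d K : ℝ}
    (hK : 0 ≤ K)
    (hE : ∀ t, 2 ≤ t →
      |∑ k ∈ Finset.Icc 0 ⌊t⌋₊, c k - d * offsetLogIntegral t| ≤ K * t / log t ^ 3)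
    {x : ℝ} (hx : 2 ≤ x) :
    |∑ k ∈ Finset.Icc 0 ⌊x⌋₊, log k / k * c k - d * log x| ≤
      K / log 2 ^ 2 + |d| * log 2 + 3 * K / log 2 := by
  rw [sum_log_div_mul_sub_eq c hc0 hc1 d hx]
  refine (abs_sub _ _).trans ((add_le_add (abs_sub _ _) le_rfl).trans ?_)
  rw [abs_mul d, abs_of_pos (log_pos one_lt_two)]
  gcongr
  · exact abs_log_div_self_mul_le hK hx (hE x hx)
  · exact abs_integral_one_sub_log_div_sq_mul_le hK hx fun t ht => hE t ht.1

noncomputable def primeIndicator (f : Set ℕ) : ℕ → ℝ := {p | p.Prime ∧ p ∈ f}.indicator 1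

lemma primeIndicator_zero (f : Set ℕ) : primeIndicator f 0 = 0 := by
  simp [primeIndicator, Nat.not_prime_zero]

lemma primeIndicator_one (f : Set ℕ) : primeIndicator f 1 = 0 := by
  simp [primeIndicator, Nat.not_prime_one]

lemma primeSumIn_eq_sum (f : Set ℕ) (g : ℝ → ℝ) (x : ℝ) :
    primeSumIn f g x = ∑ k ∈ Finset.Icc 0 ⌊x⌋₊, g k * primeIndicator f k := by
  rw [primeSumIn, Finset.sum_filter, Finset.range_eq_Ico, Finset.Ico_add_one_right_eq_Icc]
  refine Finset.sum_congr rfl fun k _ => ?_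
  by_cases hk : k.Prime ∧ k ∈ f <;> simp [primeIndicator, hk]

lemma primeCountIn_eq_sum (f : Set ℕ) (t : ℝ) :
    (primeCountIn f t : ℝ) = ∑ k ∈ Finset.Icc 0 ⌊t⌋₊, primeIndicator f k := by
  classical
  have hset : {p : ℕ | p.Prime ∧ p ∈ f ∧ (p : ℝ) ≤ t} =
      ↑((Finset.Icc 0 ⌊t⌋₊).filter fun p => p.Prime ∧ p ∈ f) := by
    ext p
    simp only [Set.mem_ofPred_eq, Finset.coe_filter, Finset.mem_Icc, zero_le, true_and]
    constructor
    · rintro ⟨hp, hf, hpt⟩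
      exact ⟨(Nat.le_floor_iff' hp.ne_zero).2 hpt, hp, hf⟩
    · rintro ⟨hpt, hp, hf⟩
      exact ⟨hp, hf, (Nat.le_floor_iff' hp.ne_zero).1 hpt⟩
  rw [primeCountIn, hset, Set.ncard_coe_finset, Finset.card_filter, Nat.cast_sum]
  refine Finset.sum_congr rfl fun k _ => ?_
  by_cases hk : k.Prime ∧ k ∈ f <;> simp [primeIndicator, hk]

theorem stmt9_general (f : Set ℕ) (d : ℝ) (c : ℝ) (hc : 0 < c)
    (C₀ : ℝ) (hC₀ : 0 < C₀)
    (hpi : ∀ x : ℝ, 2 ≤ x →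
      |(primeCountIn f x : ℝ) - d * ∫ t in (2 : ℝ)..x, 1 / Real.log t| ≤
        C₀ * x * Real.exp (-c * Real.sqrt (Real.log x))) :
    ∃ C : ℝ, 0 < C ∧ ∀ x : ℝ, 2 ≤ x →
      |primeSumIn f (fun t => Real.log t / t) x - d * Real.log x| ≤ C := by
  set K := C₀ * 720 / c ^ 6
  have hE : ∀ t, 2 ≤ t →
      |∑ k ∈ Finset.Icc 0 ⌊t⌋₊, primeIndicator f k - d * offsetLogIntegral t| ≤
        K * t / log t ^ 3 := fun t ht => by
    have hlog : 0 < log t := log_pos (one_lt_two.trans_le ht)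
    rw [← primeCountIn_eq_sum]
    calc _ ≤ C₀ * t * exp (-c * √(log t)) := hpi t ht
      _ ≤ C₀ * t * (720 / (c ^ 6 * log t ^ 3)) := by
        gcongr
        exact exp_neg_mul_sqrt_le hc hlog
      _ = K * t / log t ^ 3 := by simp only [K]; field_simp
  refine ⟨K / log 2 ^ 2 + |d| * log 2 + 3 * K / log 2, by positivity, fun x hx => ?_⟩
  rw [primeSumIn_eq_sum]
  exact abs_sum_log_div_mul_sub_le _ (primeIndicator_zero f) (primeIndicator_one f) (by positivity)
    hE hx

theorem stmt9 (f : Set ℕ) (d : ℝ) (hd : 0 < d) (c : ℝ) (hc : 0 < c)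
    (C₀ : ℝ) (hC₀ : 0 < C₀)
    (hpi : ∀ x : ℝ, 2 ≤ x →
      |(primeCountIn f x : ℝ) - d * ∫ t in (2 : ℝ)..x, 1 / Real.log t| ≤
        C₀ * x * Real.exp (-c * Real.sqrt (Real.log x))) :
    ∃ C : ℝ, 0 < C ∧ ∀ x : ℝ, 2 ≤ x →
      |primeSumIn f (fun t => Real.log t / t) x - d * Real.log x| ≤ C :=
  stmt9_general f d c hc C₀ hC₀ hpi
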